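/- Let ξ : [0,∞) → ℝ be continuous and let ξ_0 < x < y. Then the swallowing times satisfy ζ_y ≥ ζ_x, and for every t < ζ_x one has g_t(y) > g_t(x) together with the identity g_t(y) − g_t(x) = (y − x) · exp( −2 ∫₀ᵗ ds / ((g_s(x) − ξ_s)(g_s(y) − ξ_s)) ), where g(x) and g(y) are the Loewner trajectories of x and y driven by ξ. -/

import Mathlib

open MeasureTheory Filter Set

/-- `IsLoewnerTraj ξ x ζ g` says that `g` restricted to `[0, ζ)` is the maximal solution of the
real Loewner ODE `g_t = x + ∫₀ᵗ 2/(g_s − ξ_s) ds` with `g_t > ξ_t` for `t < ζ`;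
maximality means that if `ζ < ∞` then `liminf_{t → ζ⁻} (g_t − ξ_t) = 0`. -/
structure IsLoewnerTraj (ξ : ℝ → ℝ) (x : ℝ) (ζ : EReal) (g : ℝ → ℝ) : Prop where
  pos : 0 < ζ
  cont : ContinuousOn g {t : ℝ | 0 ≤ t ∧ (t : EReal) < ζ}
  gt : ∀ t : ℝ, 0 ≤ t → (t : EReal) < ζ → ξ t < g t
  ode : ∀ t : ℝ, 0 ≤ t → (t : EReal) < ζ →
    g t = x + ∫ s in (0:ℝ)..t, 2 / (g s - ξ s)
  maximal : ζ ≠ ⊤ →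
    Filter.liminf (fun t => g t - ξ t) (nhdsWithin ζ.toReal (Set.Iio ζ.toReal)) = 0

/-! Writing `a = g(x) − ξ` and `b = g(y) − ξ`, the difference `b − a = g(y) − g(x)` solves the
linear ODE `(b − a)' = 2/b − 2/a = −2 (b − a)/(ab)`, so `(b − a) · exp (2 ∫₀ᵗ 1/(ab))` has zero
right derivative and stays equal to `y − x > 0`. If `y` were swallowed first, at a finite time
`ζ_y < ζ_x`, then `b > a ≥ m > 0` on `[0, ζ_y)` for the minimum `m` of `a` on `[0, ζ_y]`; this
keeps `g(y)` bounded, hence the `liminf` at `ζ_y` demanded by maximality would be `≥ m`. -/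

open Topology

lemma hasDerivWithinAt_integral_Ici {F : ℝ → ℝ} {a b u : ℝ}
    (hF : ContinuousOn F (Icc a b)) (hu : u ∈ Ico a b) :
    HasDerivWithinAt (fun t => ∫ s in a..t, F s) (F u) (Ici u) u := by
  have hmem : Icc a b ∈ 𝓝[Ioi u] u :=
    mem_nhdsWithin.2 ⟨Iio b, isOpen_Iio, hu.2, fun t ht => ⟨hu.1.trans ht.2.le, ht.1.le⟩⟩
  refine intervalIntegral.integral_hasDerivWithinAt_right ?_
    ⟨Icc a b, hmem, hF.aestronglyMeasurable measurableSet_Icc⟩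
    ((hF u (Ico_subset_Icc_self hu)).mono_of_mem_nhdsWithin hmem)
  exact (hF.mono (Icc_subset_Icc_right hu.2.le)).intervalIntegrable_of_Icc hu.1

namespace IsLoewnerTraj

variable {ξ : ℝ → ℝ} {x : ℝ} {ζ : EReal} {g : ℝ → ℝ}

lemma apply_zero (h : IsLoewnerTraj ξ x ζ g) : g 0 = x := by
  simpa using h.ode 0 le_rfl (by simpa using h.pos)

lemma sub_pos_of_mem_Icc (h : IsLoewnerTraj ξ x ζ g) {T t : ℝ} (hT : (T : EReal) < ζ)
    (ht : t ∈ Icc 0 T) : 0 < g t - ξ t :=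
  sub_pos.2 (h.gt t ht.1 ((EReal.coe_le_coe_iff.2 ht.2).trans_lt hT))

lemma continuousOn_Icc (h : IsLoewnerTraj ξ x ζ g) {T : ℝ} (hT : (T : EReal) < ζ) :
    ContinuousOn g (Icc 0 T) :=
  h.cont.mono fun _ ht => ⟨ht.1, (EReal.coe_le_coe_iff.2 ht.2).trans_lt hT⟩

lemma continuousOn_Icc_sub (hξ : ContinuousOn ξ (Ici 0)) (h : IsLoewnerTraj ξ x ζ g) {T : ℝ}
    (hT : (T : EReal) < ζ) :
    ContinuousOn (fun t => g t - ξ t) (Icc 0 T) :=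
  (h.continuousOn_Icc hT).sub (hξ.mono fun _ ht => ht.1)

lemma hasDerivWithinAt (hξ : ContinuousOn ξ (Ici 0)) (h : IsLoewnerTraj ξ x ζ g) {T u : ℝ}
    (hT : (T : EReal) < ζ) (hu : u ∈ Ico 0 T) : HasDerivWithinAt g (2 / (g u - ξ u)) (Ici u) u := by
  have hF : ContinuousOn (fun t => 2 / (g t - ξ t)) (Icc 0 T) :=
    continuousOn_const.div (h.continuousOn_Icc_sub hξ hT) fun t ht =>
      (h.sub_pos_of_mem_Icc hT ht).ne'
  have hode : ∀ t ∈ Icc 0 T, g t = x + ∫ s in (0:ℝ)..t, 2 / (g s - ξ s) := fun t ht =>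
    h.ode t ht.1 ((EReal.coe_le_coe_iff.2 ht.2).trans_lt hT)
  have hmem : Icc 0 T ∈ 𝓝[Ici u] u :=
    mem_nhdsWithin.2 ⟨Iio T, isOpen_Iio, hu.2, fun t ht => ⟨hu.1.trans ht.2, ht.1.le⟩⟩
  exact ((hasDerivWithinAt_integral_Ici hF hu).const_add x).congr_of_eventuallyEq
    (eventually_of_mem hmem hode) (hode u (Ico_subset_Icc_self hu))

lemma apply_le_add_of_le_sub (hξ : ContinuousOn ξ (Ici 0)) (h : IsLoewnerTraj ξ x ζ g) {m t : ℝ}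
    (hm : 0 < m) (ht : 0 ≤ t) (htζ : (t : EReal) < ζ) (hle : ∀ s ∈ Icc 0 t, m ≤ g s - ξ s) :
    g t ≤ x + 2 / m * t := by
  have hint : IntervalIntegrable (fun s => 2 / (g s - ξ s)) volume 0 t :=
    (continuousOn_const.div (h.continuousOn_Icc_sub hξ htζ) fun s hs =>
      (hm.trans_le (hle s hs)).ne').intervalIntegrable_of_Icc ht
  have hbound : ∫ s in (0:ℝ)..t, 2 / (g s - ξ s) ≤ ∫ _ in (0:ℝ)..t, 2 / m :=
    intervalIntegral.integral_mono_on ht hint intervalIntegrable_const fun s hs =>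
      div_le_div_of_nonneg_left zero_le_two hm (hle s hs)
  rw [intervalIntegral.integral_const, smul_eq_mul, sub_zero] at hbound
  rw [h.ode t ht htζ]
  linarith

lemma exists_sub_lt_of_ne_top (hξ : ContinuousOn ξ (Ici 0)) (h : IsLoewnerTraj ξ x ζ g) (hζ : ζ ≠ ⊤)
    {m : ℝ} (hm : 0 < m) :
    ∃ t : ℝ, 0 ≤ t ∧ (t : EReal) < ζ ∧ g t - ξ t < m := by
  obtain ⟨c, rfl⟩ : ∃ c : ℝ, ζ = c :=
    ⟨ζ.toReal, (EReal.coe_toReal hζ (EReal.bot_lt_zero.trans h.pos).ne').symm⟩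
  by_contra! hle
  have hc : 0 < c := by exact_mod_cast h.pos
  obtain ⟨L, hL⟩ := isCompact_Icc.bddBelow_image (hξ.mono fun t (ht : t ∈ Icc 0 c) => ht.1)
  have hnear : ∀ᶠ t in 𝓝[<] c, m ≤ g t - ξ t ∧ g t - ξ t ≤ x + 2 / m * c - L := by
    filter_upwards [Ioo_mem_nhdsLT hc] with t ht
    have htc : (t : EReal) < c := EReal.coe_lt_coe_iff.2 ht.2
    have hgt := h.apply_le_add_of_le_sub hξ hm ht.1.le htc fun s hs =>
      hle s hs.1 ((EReal.coe_le_coe_iff.2 hs.2).trans_lt htc)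
    have hLt := hL ⟨t, ⟨ht.1.le, ht.2.le⟩, rfl⟩
    have hmt := mul_le_mul_of_nonneg_left ht.2.le (div_pos two_pos hm).le
    exact ⟨hle t ht.1.le htc, by linarith⟩
  have hliminf := h.maximal hζ
  rw [EReal.toReal_coe] at hliminf
  have hm_le : m ≤ 0 := hliminf ▸ le_liminf_of_le
    (isCoboundedUnder_ge_of_eventually_le _ (hnear.mono fun _ ht => ht.2))
    (hnear.mono fun _ ht => ht.1)
  linarith

variable {y : ℝ} {ζx ζy : EReal} {gx gy : ℝ → ℝ}

lemma sub_mul_exp_integral_eq (hξ : ContinuousOn ξ (Ici 0)) (hLx : IsLoewnerTraj ξ x ζx gx)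
    (hLy : IsLoewnerTraj ξ y ζy gy) {T : ℝ} (hT : 0 ≤ T) (hTx : (T : EReal) < ζx)
    (hTy : (T : EReal) < ζy) :
    (gy T - gx T) * Real.exp (2 * ∫ s in (0:ℝ)..T, ((gx s - ξ s) * (gy s - ξ s))⁻¹) = y - x := by
  set q : ℝ → ℝ := fun s => ((gx s - ξ s) * (gy s - ξ s))⁻¹ with hq
  set E : ℝ → ℝ := fun t => ∫ s in (0:ℝ)..t, q s
  have hqc : ContinuousOn q (Icc 0 T) :=
    ((hLx.continuousOn_Icc_sub hξ hTx).mul (hLy.continuousOn_Icc_sub hξ hTy)).inv₀ fun t ht =>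
      (mul_pos (hLx.sub_pos_of_mem_Icc hTx ht) (hLy.sub_pos_of_mem_Icc hTy ht)).ne'
  have hEc : ContinuousOn E (Icc 0 T) := by
    simpa [uIcc_of_le hT] using intervalIntegral.continuousOn_primitive_interval
      (hqc.integrableOn_Icc.mono_set (uIcc_of_le hT).subset)
  have hφc : ContinuousOn (fun t => (gy t - gx t) * Real.exp (2 * E t)) (Icc 0 T) :=
    ((hLy.continuousOn_Icc hTy).sub (hLx.continuousOn_Icc hTx)).mul
      (Real.continuous_exp.comp_continuousOn (continuousOn_const.mul hEc))
  have hφd : ∀ u ∈ Ico 0 T,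
      HasDerivWithinAt (fun t => (gy t - gx t) * Real.exp (2 * E t)) 0 (Ici u) u := by
    intro u hu
    refine (((hLy.hasDerivWithinAt hξ hTy hu).sub (hLx.hasDerivWithinAt hξ hTx hu)).mul
      ((hasDerivWithinAt_integral_Ici hqc hu).const_mul 2).exp).congr_deriv ?_
    have ha := (hLx.sub_pos_of_mem_Icc hTx (Ico_subset_Icc_self hu)).ne'
    have hb := (hLy.sub_pos_of_mem_Icc hTy (Ico_subset_Icc_self hu)).ne'
    simp only [hq, Pi.sub_apply]
    field_simp
    ring
  have hconst := constant_of_has_deriv_right_zero hφc hφd T ⟨hT, le_rfl⟩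
  simpa [E, hLx.apply_zero, hLy.apply_zero] using hconst

lemma sub_eq_mul_exp_integral (hξ : ContinuousOn ξ (Ici 0)) (hLx : IsLoewnerTraj ξ x ζx gx)
    (hLy : IsLoewnerTraj ξ y ζy gy) {T : ℝ} (hT : 0 ≤ T) (hTx : (T : EReal) < ζx)
    (hTy : (T : EReal) < ζy) :
    gy T - gx T = (y - x) * Real.exp (-2 * ∫ s in (0:ℝ)..T, ((gx s - ξ s) * (gy s - ξ s))⁻¹) := by
  rw [← sub_mul_exp_integral_eq hξ hLx hLy hT hTx hTy, mul_assoc, ← Real.exp_add,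
    neg_mul, add_neg_cancel, Real.exp_zero, mul_one]

lemma apply_lt_of_lt (hξ : ContinuousOn ξ (Ici 0)) (hLx : IsLoewnerTraj ξ x ζx gx)
    (hLy : IsLoewnerTraj ξ y ζy gy) (hxy : x < y) {T : ℝ} (hT : 0 ≤ T)
    (hTx : (T : EReal) < ζx) (hTy : (T : EReal) < ζy) : gx T < gy T := by
  have hpos : 0 < gy T - gx T := by
    rw [sub_eq_mul_exp_integral hξ hLx hLy hT hTx hTy]
    exact mul_pos (sub_pos.2 hxy) (Real.exp_pos _)
  linarith

lemma swallowingTime_le_of_lt (hξ : ContinuousOn ξ (Ici 0)) (hLx : IsLoewnerTraj ξ x ζx gx)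
    (hLy : IsLoewnerTraj ξ y ζy gy) (hxy : x < y) : ζx ≤ ζy := by
  by_contra! hlt
  obtain ⟨c, hyc, hcx⟩ := EReal.lt_iff_exists_real_btwn.1 hlt
  have hc : 0 ≤ c := by exact_mod_cast (hLy.pos.trans hyc).le
  obtain ⟨t₀, ht₀, hmin⟩ :=
    isCompact_Icc.exists_isMinOn (nonempty_Icc.2 hc) (hLx.continuousOn_Icc_sub hξ hcx)
  obtain ⟨t, ht, hty, hclose⟩ :=
    hLy.exists_sub_lt_of_ne_top hξ (ne_top_of_lt hlt) (hLx.sub_pos_of_mem_Icc hcx ht₀)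
  have hmin_t : gx t₀ - ξ t₀ ≤ gx t - ξ t :=
    hmin ⟨ht, (EReal.coe_lt_coe_iff.1 (hty.trans hyc)).le⟩
  have hxt := hLx.apply_lt_of_lt hξ hLy hxy ht (hty.trans hlt) hty
  linarith

end IsLoewnerTraj

theorem stmt3_general
    (ξ : ℝ → ℝ) (hc : ContinuousOn ξ (Set.Ici 0))
    (x y : ℝ) (hxy : x < y)
    (ζx ζy : EReal) (gx gy : ℝ → ℝ)
    (hLx : IsLoewnerTraj ξ x ζx gx)
    (hLy : IsLoewnerTraj ξ y ζy gy) :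
    ζx ≤ ζy ∧
    ∀ t : ℝ, 0 ≤ t → (t : EReal) < ζx →
      gx t < gy t ∧
      gy t - gx t
        = (y - x) * Real.exp (-2 * ∫ s in (0:ℝ)..t, ((gx s - ξ s) * (gy s - ξ s))⁻¹) := by
  have hζ := hLx.swallowingTime_le_of_lt hc hLy hxy
  refine ⟨hζ, fun t ht htx => ?_⟩
  have hty := htx.trans_le hζ
  exact ⟨hLx.apply_lt_of_lt hc hLy hxy ht htx hty, hLx.sub_eq_mul_exp_integral hc hLy ht htx hty⟩

/-- Monotonicity of real Loewner trajectories: for `ξ_0 < x < y` one has `ζ_y ≥ ζ_x`,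
and for every `t < ζ_x`, `g_t(y) > g_t(x)` with
`g_t(y) − g_t(x) = (y − x) · exp(−2 ∫₀ᵗ ds/((g_s(x) − ξ_s)(g_s(y) − ξ_s)))`. -/
theorem stmt3
    (ξ : ℝ → ℝ) (hc : ContinuousOn ξ (Set.Ici 0))
    (x y : ℝ) (hx : ξ 0 < x) (hxy : x < y)
    (ζx ζy : EReal) (gx gy : ℝ → ℝ)
    (hLx : IsLoewnerTraj ξ x ζx gx)
    (hLy : IsLoewnerTraj ξ y ζy gy) :
    ζx ≤ ζy ∧
    ∀ t : ℝ, 0 ≤ t → (t : EReal) < ζx →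
      gx t < gy t ∧
      gy t - gx t
        = (y - x) * Real.exp (-2 * ∫ s in (0:ℝ)..t, ((gx s - ξ s) * (gy s - ξ s))⁻¹) :=
  stmt3_general ξ hc x y hxy ζx ζy gx gy hLx hLy
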